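/- arXiv:1912.12945 — 3 statements merged into one kernel-verified Lean document; each statement's English description precedes it below -/
import Mathlib

section
/- Let ψ: Z × Θ × H₁ × H₂ → ℝ^d define moments M(θ, η₁) = P[ψ(Z; θ, η₁(Z, θ₁'), η₂*(Z))]. Suppose M is Fréchet differentiable at (θ*, η₁*(·, θ₁*)) with derivative decomposing as J*(θ − θ*) + D[η₁′ − η₁*(·, θ₁*)] plus errors o(‖θ − θ*‖) + o(‖η₁′ − η₁*(·, θ₁*)‖_{L²(P)}), where D is a bounded linear operator. If on a neighborhood N of (θ*, η₁*(·, θ₁*)) we have D[η₁′(·, θ₁′) − η₁*(·, θ₁*)] = 0 for all (θ, η₁′(·, θ₁′)) ∈ N, and ‖η₁*(·, θ₁′) − η₁*(·, θ₁*)‖_{L²(P)} ≤ C‖θ₁′ − θ₁*‖, then the partial derivative in θ of θ ↦ P[ψ(Z; θ, η₁*(Z, θ₁), η₂*(Z))] at θ = θ* equals J* = ∂_θ P[ψ(Z; θ, η₁*(Z, θ₁*), η₂*(Z))]|_{θ=θ*}; that is, the Jacobian with the nuisance frozen at θ₁* coincides with the Jacobian of the fully θ-dependent moment. -/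
open Filter Topology Asymptotics

/-!
Along the true nuisance path `θ ↦ (θ, η θ)` the increment of the joint moment map is
`J (θ - θ*) + D (η θ - η θ*) + o(‖(θ - θ*, η θ - η θ*)‖)`. Orthogonality kills the `D`-term once
`η θ` is close to `η θ*`, and the Lipschitz bound turns the remainder into `o(‖θ - θ*‖)`, so the
path behaves to first order like the frozen one. No differentiability of `η` is needed.
-/

section

variable {𝕜 E F H : Type*} [NontriviallyNormedField 𝕜]
  [NormedAddCommGroup E] [NormedSpace 𝕜 E] [NormedAddCommGroup F] [NormedSpace 𝕜 F]
  [NormedAddCommGroup H] [NormedSpace 𝕜 H]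

theorem Asymptotics.IsBigO.tendsto_nhds_of_sub {f : E → F} {x : E}
    (hf : (fun y => f y - f x) =O[𝓝 x] fun y => y - x) : Tendsto f (𝓝 x) (𝓝 (f x)) :=
  tendsto_iff_norm_sub_tendsto_zero.2 <|
    (isBigO_norm_left.2 hf).trans_tendsto (tendsto_sub_nhds_zero_iff.2 tendsto_id)

theorem HasFDerivAt.comp_of_isBigO_of_eventually_eq {g : F → H} {L : F →L[𝕜] H}
    {L' : E →L[𝕜] H} {f : E → F} {x : E} (hg : HasFDerivAt g L (f x))
    (hf : (fun y => f y - f x) =O[𝓝 x] fun y => y - x)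
    (hL : ∀ᶠ y in 𝓝 x, L (f y - f x) = L' (y - x)) :
    HasFDerivAt (g ∘ f) L' x := by
  refine HasFDerivAt.of_isLittleO <|
    ((hg.isLittleO.comp_tendsto hf.tendsto_nhds_of_sub).trans_isBigO hf).congr' ?_ .rfl
  filter_upwards [hL] with y hy
  simp only [Function.comp, hy]

theorem HasFDerivAt.comp_prodMk_of_eventually_map_sub_eq_zero {G : E × H → F}
    {J : E →L[𝕜] F} {D : H →L[𝕜] F} {η : E → H} {x : E}
    (hG : HasFDerivAt G (J.comp (ContinuousLinearMap.fst 𝕜 E H) +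
      D.comp (ContinuousLinearMap.snd 𝕜 E H)) (x, η x))
    (hη : (fun y => η y - η x) =O[𝓝 x] fun y => y - x)
    (hD : ∀ᶠ y in 𝓝 x, D (η y - η x) = 0) :
    HasFDerivAt (fun y => G (y, η y)) J x := by
  refine hG.comp_of_isBigO_of_eventually_eq (f := fun y => (y, η y))
    ((isBigO_refl _ _).prod_left hη) ?_
  filter_upwards [hD] with y hy
  simp [hy]

end

/-- If the joint moment map `G(θ, η₁)` is Fréchet differentiable at
`(θ*, η₁*(·, θ₁*))` with derivative `J*(θ − θ*) + D[η₁′ − η₁*(·, θ₁*)]`, the bounded linear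
operator `D` vanishes on (differences from) a neighborhood of `η₁*(·, θ₁*)`, and the true
nuisance path `θ ↦ η₁*(·, θ₁)` is Lipschitz in L²(P) (abstracted here as the normed space `H`),
then the θ-derivative of the fully θ-dependent moment `θ ↦ G(θ, η₁*(·, θ₁))` at `θ*` equals
`J*`, the Jacobian with the nuisance frozen at `θ₁*`. -/
theorem stmt_0 {E H : Type*} [NormedAddCommGroup E] [NormedSpace ℝ E]
    [NormedAddCommGroup H] [NormedSpace ℝ H]
    (G : E × H → E) (θstar : E) (η : E → H)
    (Jstar : E →L[ℝ] E) (D : H →L[ℝ] E) (C : ℝ)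
    -- Fréchet differentiability of the joint moment map at (θ*, η₁*(·, θ₁*))
    (hdiff : HasFDerivAt G
      (Jstar.comp (ContinuousLinearMap.fst ℝ E H) + D.comp (ContinuousLinearMap.snd ℝ E H))
      (θstar, η θstar))
    -- orthogonality: D kills nuisance perturbations within a neighborhood N
    (N : Set H) (hN : N ∈ nhds (η θstar))
    (horth : ∀ h ∈ N, D (h - η θstar) = 0)
    -- Lipschitz continuity of the true nuisance path in the L²(P) norm
    (hLip : ∀ θ, ‖η θ - η θstar‖ ≤ C * ‖θ - θstar‖) :
    HasFDerivAt (fun θ => G (θ, η θ)) Jstar θstar ∧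
    HasFDerivAt (fun θ => G (θ, η θstar)) Jstar θstar := by
  have hη : (fun θ => η θ - η θstar) =O[𝓝 θstar] fun θ => θ - θstar := isBigO_of_le' _ hLip
  refine ⟨hdiff.comp_prodMk_of_eventually_map_sub_eq_zero hη ?_,
    hdiff.comp_prodMk_of_eventually_map_sub_eq_zero (η := fun _ => η θstar)
      (by simpa using isBigO_zero _ _) (by simp)⟩
  filter_upwards [hη.tendsto_nhds_of_sub.eventually_mem hN] with θ hθ
  exact horth _ hθ
end

section
/- For the estimating function ψ(Z; θ, η₁(Z; θ₁), η₂(Z)) = (1{T=1}/η₂(Z))·(U(Y; θ₁) − η₁(Z; θ₁)) + η₁(Z; θ₁) + V(θ₂), with true nuisances η₁*(Z; θ₁) = E[U(Y; θ₁) | X, T=1] and η₂*(Z) = P(T=1 | X), the Gateaux derivative in the direction of any perturbation (η₁ − η₁*, η₂ − η₂*) vanishes at the truth: d/dr P[ψ(Z; θ*, η₁* + r(η₁ − η₁*), η₂* + r(η₂ − η₂*))]|_{r=0} = 0, provided η₂*(X) ≥ ε > 0 and the perturbed η₂ is bounded away from zero. -/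
open MeasureTheory

lemma pullout {Ω : Type*} {m mΩ : MeasurableSpace Ω} (hm : m ≤ mΩ) (P : Measure Ω)
    [IsFiniteMeasure P] (f g : Ω → ℝ) (hf : StronglyMeasurable[m] f)
    (hfg : Integrable (fun ω => f ω * g ω) P) (hg : Integrable g P) :
    ∫ ω, f ω * g ω ∂P = ∫ ω, f ω * (P[g|m]) ω ∂P := by
  have h := condExp_mul_of_stronglyMeasurable_left hf hfg hg
  rw [← integral_condExp hm (f := fun ω => f ω * g ω)]
  exact integral_congr_ae h

set_option maxHeartbeats 2000000

/-- Neyman orthogonality of the doubly robust estimating function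
`ψ = (1{T=1}/η₂)·(U − η₁) + η₁ + V(θ₂)` at the true nuisances
`η₁*(Z) = E[U | X, T=1]` (encoded by `η₂*·η₁* = E[T·U | σ(X)]`) and `η₂* = P(T=1|X)`
(encoded by `η₂* = E[T | σ(X)]`): the Gateaux derivative in any perturbation direction
`(η₁ − η₁*, η₂ − η₂*)` vanishes at `r = 0`, provided `η₂* ≥ ε > 0` and the perturbed
`η₂` is bounded away from zero, with square-integrable nuisances. `m` is the σ-algebra
generated by `X`. -/
theorem stmt_2 {Ω : Type*} (m : MeasurableSpace Ω) {mΩ : MeasurableSpace Ω} (P : Measure Ω) [IsProbabilityMeasure P]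
    (hm : m ≤ mΩ) (ε : ℝ) (hε : 0 < ε)
    (T U η₁s η₂s η₁ η₂ : Ω → ℝ) (V : ℝ)
    (hTmeas : Measurable T) (hUmeas : Measurable U)
    (hT : ∀ ω, T ω = 0 ∨ T ω = 1)
    -- nuisances are functions of X, i.e. m-measurable
    (hη₁s : StronglyMeasurable[m] η₁s) (hη₂s : StronglyMeasurable[m] η₂s)
    (hη₁ : StronglyMeasurable[m] η₁) (hη₂ : StronglyMeasurable[m] η₂)
    -- the true propensity η₂* is a version of E[T | X], bounded in [ε, 1]
    (hprop : η₂s =ᵐ[P] P[T | m])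
    (hη₂sε : ∀ ω, ε ≤ η₂s ω ∧ η₂s ω ≤ 1)
    -- the perturbed propensity is bounded away from zero
    (hη₂ε : ∀ ω, ε ≤ η₂ ω ∧ η₂ ω ≤ 1)
    -- the true regression η₁* = E[U | X, T = 1], i.e. η₂*·η₁* = E[T·U | X]
    (hreg : (fun ω => η₂s ω * η₁s ω) =ᵐ[P] P[fun ω => T ω * U ω | m])
    -- square integrability
    (hU : MemLp U 2 P) (hη₁sL : MemLp η₁s 2 P) (hη₁L : MemLp η₁ 2 P) :
    HasDerivAt (fun r : ℝ =>
      ∫ ω, (T ω / (η₂s ω + r * (η₂ ω - η₂s ω))) *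
            (U ω - (η₁s ω + r * (η₁ ω - η₁s ω)))
          + (η₁s ω + r * (η₁ ω - η₁s ω)) + V ∂P) 0 0 := by
  -- abbreviations
  set Δ₁ : Ω → ℝ := fun ω => η₁ ω - η₁s ω with hΔ₁def
  set Δ₂ : Ω → ℝ := fun ω => η₂ ω - η₂s ω with hΔ₂def
  clear_value Δ₁ Δ₂
  -- basic measurability
  have mT : @Measurable Ω ℝ mΩ _ T := hTmeas
  have mU : @Measurable Ω ℝ mΩ _ U := hUmeas
  have mη₁s := (hη₁s.mono hm).measurable
  have mη₂s := (hη₂s.mono hm).measurable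
  have mη₁ := (hη₁.mono hm).measurable
  have mη₂ := (hη₂.mono hm).measurable
  have mΔ₁ : @Measurable Ω ℝ mΩ _ Δ₁ := by rw [hΔ₁def]; exact mη₁.sub mη₁s
  have mΔ₂ : @Measurable Ω ℝ mΩ _ Δ₂ := by rw [hΔ₂def]; exact mη₂.sub mη₂s
  -- basic bounds
  have hTb : ∀ ω, |T ω| ≤ 1 := by
    intro ω; rcases hT ω with h | h <;> rw [h] <;> norm_num
  have hΔ₂b : ∀ ω, |Δ₂ ω| ≤ 1 := by
    intro ω
    have h1 := hη₂sε ω; have h2 := hη₂ε ω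
    simp only [hΔ₂def]; rw [abs_le]; constructor <;> nlinarith
  have hεpos2 : (0:ℝ) < ε / 2 := by linarith
  -- denominator bounds on the ball
  have hden : ∀ r : ℝ, r ∈ Metric.ball (0:ℝ) (ε/2) → ∀ ω, ε/2 ≤ η₂s ω + r * Δ₂ ω := by
    intro r hr ω
    have hr' : |r| < ε/2 := by simpa [Real.dist_eq] using hr
    have h1 := (hη₂sε ω).1
    have h2 : |r * Δ₂ ω| ≤ |r| := by
      rw [abs_mul]
      calc |r| * |Δ₂ ω| ≤ |r| * 1 := by
            exact mul_le_mul_of_nonneg_left (hΔ₂b ω) (abs_nonneg r)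
        _ = |r| := mul_one _
    have h3 : -(ε/2) < r * Δ₂ ω := by
      have := neg_abs_le (r * Δ₂ ω)
      linarith
    linarith
  have hdenne : ∀ r : ℝ, r ∈ Metric.ball (0:ℝ) (ε/2) → ∀ ω, η₂s ω + r * Δ₂ ω ≠ 0 := by
    intro r hr ω
    exact ne_of_gt (lt_of_lt_of_le hεpos2 (hden r hr ω))
  -- integrability of the basic functions
  have hUi : Integrable U P := hU.integrable one_le_two
  have hη₁si : Integrable η₁s P := hη₁sL.integrable one_le_two
  have hη₁i : Integrable η₁ P := hη₁L.integrable one_le_two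
  have hΔ₁i : Integrable Δ₁ P := by rw [hΔ₁def]; exact hη₁i.sub hη₁si
  -- the family and its derivative
  set F : ℝ → Ω → ℝ := fun r ω =>
    (T ω / (η₂s ω + r * Δ₂ ω)) * (U ω - (η₁s ω + r * Δ₁ ω)) + (η₁s ω + r * Δ₁ ω) + V
    with hFdef
  set F' : ℝ → Ω → ℝ := fun r ω =>
    (-(T ω * Δ₂ ω) / (η₂s ω + r * Δ₂ ω)^2) * (U ω - (η₁s ω + r * Δ₁ ω))
      + (T ω / (η₂s ω + r * Δ₂ ω)) * (-Δ₁ ω) + Δ₁ ω with hF'def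
  -- measurability of the families
  have hFmeas : ∀ r : ℝ, AEStronglyMeasurable[mΩ] (F r) P := by
    intro r
    refine Measurable.aestronglyMeasurable ?_
    have h1 : @Measurable Ω ℝ mΩ _ (fun ω => η₂s ω + r * Δ₂ ω) := mη₂s.add (mΔ₂.const_mul r)
    have h2 : @Measurable Ω ℝ mΩ _ (fun ω => η₁s ω + r * Δ₁ ω) := mη₁s.add (mΔ₁.const_mul r)
    exact (((mT.div h1).mul (mU.sub h2)).add h2).add measurable_const
  -- measurability of F'
  have hF'meas : ∀ r : ℝ, @Measurable Ω ℝ mΩ _ (F' r) := by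
    intro r
    have h1 : @Measurable Ω ℝ mΩ _ (fun ω => η₂s ω + r * Δ₂ ω) := mη₂s.add (mΔ₂.const_mul r)
    have h2 : @Measurable Ω ℝ mΩ _ (fun ω => η₁s ω + r * Δ₁ ω) := mη₁s.add (mΔ₁.const_mul r)
    exact ((((mT.mul mΔ₂).neg.div (h1.pow_const 2)).mul (mU.sub h2)).add
      ((mT.div h1).mul mΔ₁.neg)).add mΔ₁
  -- pointwise differentiability
  have hdiff : ∀ ω, ∀ r ∈ Metric.ball (0:ℝ) (ε/2), HasDerivAt (fun r => F r ω) (F' r ω) r := by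
    intro ω r hr
    have hdne := hdenne r hr ω
    have hd : HasDerivAt (fun r : ℝ => η₂s ω + r * Δ₂ ω) (Δ₂ ω) r := by
      simpa using ((hasDerivAt_id r).mul_const (Δ₂ ω)).const_add (η₂s ω)
    have hlin : HasDerivAt (fun r : ℝ => η₁s ω + r * Δ₁ ω) (Δ₁ ω) r := by
      simpa using ((hasDerivAt_id r).mul_const (Δ₁ ω)).const_add (η₁s ω)
    have hq : HasDerivAt (fun r : ℝ => T ω / (η₂s ω + r * Δ₂ ω))
        (-(T ω * Δ₂ ω) / (η₂s ω + r * Δ₂ ω)^2) r := by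
      rw [show -(T ω * Δ₂ ω) / (η₂s ω + r * Δ₂ ω)^2
          = (0 * (η₂s ω + r * Δ₂ ω) - T ω * Δ₂ ω) / (η₂s ω + r * Δ₂ ω)^2 by ring]
      exact (hasDerivAt_const r (T ω)).div hd hdne
    have hu : HasDerivAt (fun r : ℝ => U ω - (η₁s ω + r * Δ₁ ω)) (-Δ₁ ω) r :=
      hlin.const_sub (U ω)
    have H := ((hq.mul hu).add hlin).add_const V
    have hval : -(T ω * Δ₂ ω) / (η₂s ω + r * Δ₂ ω)^2 * (U ω - (η₁s ω + r * Δ₁ ω))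
        + T ω / (η₂s ω + r * Δ₂ ω) * -Δ₁ ω + Δ₁ ω = F' r ω := by
      simp only [hF'def]
    exact hval ▸ H
  -- uniform bound for F' on the ball
  set bound : Ω → ℝ := fun ω =>
    (4/ε^2) * (|U ω| + |η₁s ω| + (ε/2) * (|η₁ ω| + |η₁s ω|))
      + (2/ε) * (|η₁ ω| + |η₁s ω|) + (|η₁ ω| + |η₁s ω|) with hbounddef
  have hΔ₁b : ∀ ω, |Δ₁ ω| ≤ |η₁ ω| + |η₁s ω| := by
    intro ω
    rw [hΔ₁def]
    exact abs_sub _ _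
  have hboundle : ∀ ω, ∀ r ∈ Metric.ball (0:ℝ) (ε/2), ‖F' r ω‖ ≤ bound ω := by
    intro ω r hr
    have hd := hden r hr ω
    have hdpos : 0 < η₂s ω + r * Δ₂ ω := lt_of_lt_of_le hεpos2 hd
    have hr' : |r| < ε/2 := by simpa [Real.dist_eq] using hr
    set d := η₂s ω + r * Δ₂ ω with hddef
    have hub : |U ω - (η₁s ω + r * Δ₁ ω)| ≤ |U ω| + |η₁s ω| + (ε/2) * (|η₁ ω| + |η₁s ω|) := by
      have h1 : |U ω - (η₁s ω + r * Δ₁ ω)| ≤ |U ω| + |η₁s ω + r * Δ₁ ω| := abs_sub _ _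
      have h2 : |η₁s ω + r * Δ₁ ω| ≤ |η₁s ω| + |r| * |Δ₁ ω| := by
        calc |η₁s ω + r * Δ₁ ω| ≤ |η₁s ω| + |r * Δ₁ ω| := abs_add_le _ _
          _ = |η₁s ω| + |r| * |Δ₁ ω| := by rw [abs_mul]
      have h3 : |r| * |Δ₁ ω| ≤ (ε/2) * (|η₁ ω| + |η₁s ω|) := by
        apply mul_le_mul hr'.le (hΔ₁b ω) (abs_nonneg _) (by positivity)
      linarith
    have e2 : |T ω| * |Δ₂ ω| / d^2 ≤ 4/ε^2 := by
      rw [div_le_div_iff₀ (by positivity) (by positivity)]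
      have ht1 : |T ω| * |Δ₂ ω| ≤ 1 := by
        calc |T ω| * |Δ₂ ω| ≤ 1 * 1 :=
              mul_le_mul (hTb ω) (hΔ₂b ω) (abs_nonneg _) zero_le_one
          _ = 1 := by norm_num
      have h4 : ε^2 ≤ 4 * d^2 := by nlinarith [hd, hεpos2]
      have h5 := mul_le_mul_of_nonneg_right ht1 (sq_nonneg ε)
      nlinarith [h4, h5, sq_nonneg ε]
    have e3 : |T ω| / d ≤ 2/ε := by
      rw [div_le_div_iff₀ hdpos hε]
      nlinarith [hTb ω, hd, hε, abs_nonneg (T ω)]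
    have t1 : |(-(T ω * Δ₂ ω) / d^2) * (U ω - (η₁s ω + r * Δ₁ ω))|
        ≤ (4/ε^2) * (|U ω| + |η₁s ω| + (ε/2) * (|η₁ ω| + |η₁s ω|)) := by
      rw [abs_mul, abs_div, abs_neg, abs_mul, abs_pow, abs_of_pos hdpos]
      exact mul_le_mul e2 hub (abs_nonneg _) (by positivity)
    have t2 : |(T ω / d) * (-Δ₁ ω)| ≤ (2/ε) * (|η₁ ω| + |η₁s ω|) := by
      rw [abs_mul, abs_div, abs_neg, abs_of_pos hdpos]
      exact mul_le_mul e3 (hΔ₁b ω) (abs_nonneg _) (by positivity)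
    have expand : F' r ω = (-(T ω * Δ₂ ω) / d^2) * (U ω - (η₁s ω + r * Δ₁ ω))
        + (T ω / d) * (-Δ₁ ω) + Δ₁ ω := by simp only [hF'def, hddef]
    rw [Real.norm_eq_abs, expand, hbounddef]
    calc |(-(T ω * Δ₂ ω) / d^2) * (U ω - (η₁s ω + r * Δ₁ ω)) + (T ω / d) * (-Δ₁ ω) + Δ₁ ω|
        ≤ |(-(T ω * Δ₂ ω) / d^2) * (U ω - (η₁s ω + r * Δ₁ ω)) + (T ω / d) * (-Δ₁ ω)| + |Δ₁ ω| :=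
          abs_add_le _ _
      _ ≤ |(-(T ω * Δ₂ ω) / d^2) * (U ω - (η₁s ω + r * Δ₁ ω))| + |(T ω / d) * (-Δ₁ ω)| + |Δ₁ ω| := by
          linarith [abs_add_le ((-(T ω * Δ₂ ω) / d^2) * (U ω - (η₁s ω + r * Δ₁ ω))) ((T ω / d) * (-Δ₁ ω))]
      _ ≤ _ := by
          have := hΔ₁b ω
          linarith [t1, t2]
  -- integrability of the bound
  have hboundint : Integrable bound P := by
    rw [hbounddef]
    apply Integrable.add
    apply Integrable.add
    · exact ((hUi.abs.add hη₁si.abs).add ((hη₁i.abs.add hη₁si.abs).const_mul (ε/2))).const_mul _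
    · exact (hη₁i.abs.add hη₁si.abs).const_mul _
    · exact hη₁i.abs.add hη₁si.abs
  -- integrability of F 0
  have hF0int : Integrable (F 0) P := by
    apply Integrable.mono' (g := fun ω => (2/ε) * (|U ω| + |η₁s ω|) + |η₁s ω| + |V|)
    · exact (((hUi.abs.add hη₁si.abs).const_mul _).add hη₁si.abs).add (integrable_const _)
    · exact hFmeas 0
    · refine Filter.Eventually.of_forall (fun ω => ?_)
      have h1 := (hη₂sε ω).1
      have expand : F 0 ω = (T ω / η₂s ω) * (U ω - η₁s ω) + η₁s ω + V := by
        simp only [hFdef]; ring_nf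
      rw [Real.norm_eq_abs, expand]
      have e3 : |T ω| / η₂s ω ≤ 2/ε := by
        rw [div_le_div_iff₀ (by linarith) hε]
        nlinarith [hTb ω, hε, abs_nonneg (T ω)]
      have t1 : |(T ω / η₂s ω) * (U ω - η₁s ω)| ≤ (2/ε) * (|U ω| + |η₁s ω|) := by
        rw [abs_mul, abs_div, abs_of_pos (by linarith : (0:ℝ) < η₂s ω)]
        exact mul_le_mul e3 (abs_sub _ _) (abs_nonneg _) (by positivity)
      calc |(T ω / η₂s ω) * (U ω - η₁s ω) + η₁s ω + V|
          ≤ |(T ω / η₂s ω) * (U ω - η₁s ω) + η₁s ω| + |V| := abs_add_le _ _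
        _ ≤ |(T ω / η₂s ω) * (U ω - η₁s ω)| + |η₁s ω| + |V| := by
            linarith [abs_add_le ((T ω / η₂s ω) * (U ω - η₁s ω)) (η₁s ω)]
        _ ≤ _ := by linarith [t1]
  -- differentiation under the integral sign
  obtain ⟨hF'0int, hderiv⟩ : Integrable (F' 0) P ∧
      HasDerivAt (fun r => ∫ ω, F r ω ∂P) (∫ ω, F' 0 ω ∂P) 0 := by
    letI : MeasurableSpace Ω := mΩ
    exact hasDerivAt_integral_of_dominated_loc_of_deriv_le
      (μ := P) (F := F) (F' := F') (x₀ := (0:ℝ)) (bound := bound) (Metric.ball_mem_nhds 0 hεpos2)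
      (Filter.Eventually.of_forall hFmeas) hF0int ((hF'meas 0).aestronglyMeasurable)
      (Filter.Eventually.of_forall (fun ω => hboundle ω))
      hboundint (Filter.Eventually.of_forall (fun ω => hdiff ω))
  have hTint : Integrable T P :=
    (integrable_const (1:ℝ)).mono' mT.aestronglyMeasurable
      (Filter.Eventually.of_forall fun ω => by simpa using hTb ω)
  -- the derivative at 0 is zero
  have hzero : ∫ ω, F' 0 ω ∂P = 0 := by
    have hη₂spos : ∀ ω, 0 < η₂s ω := fun ω => lt_of_lt_of_le hε (hη₂sε ω).1
    have hη₂sne : ∀ ω, η₂s ω ≠ 0 := fun ω => ne_of_gt (hη₂spos ω)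
    -- pointwise decomposition
    have hpt : ∀ ω, F' 0 ω = (-Δ₂ ω / η₂s ω ^ 2) * (T ω * U ω)
        + (Δ₂ ω * η₁s ω / η₂s ω ^ 2 - Δ₁ ω / η₂s ω) * T ω + Δ₁ ω := by
      intro ω
      simp only [hF'def, zero_mul, add_zero]
      field_simp
      ring
    -- integrability pieces
    have hTU : Integrable (fun ω => T ω * U ω) P :=
      hUi.bdd_mul mT.aestronglyMeasurable (c := 1) (Filter.Eventually.of_forall fun ω => by simpa using hTb ω)
    have hη₂η₁ : Integrable (fun ω => η₂s ω * η₁s ω) P :=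
      hη₁si.bdd_mul mη₂s.aestronglyMeasurable
        (c := 1) (Filter.Eventually.of_forall fun ω => by
          have h := hη₂sε ω
          rw [Real.norm_eq_abs, abs_le]
          constructor <;> linarith)
    have hε2 : ∀ ω, ε^2 ≤ η₂s ω ^ 2 := by
      intro ω
      have h := (hη₂sε ω).1
      nlinarith [hε]
    have hg₁b : ∀ ω, |(-Δ₂ ω / η₂s ω ^ 2)| ≤ 1/ε^2 := by
      intro ω
      rw [abs_div, abs_neg, abs_of_pos (pow_pos (hη₂spos ω) 2)]
      exact div_le_div₀ zero_le_one (hΔ₂b ω) (pow_pos hε 2) (hε2 ω)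
    have hg₂b : ∀ ω, |Δ₂ ω * η₁s ω / η₂s ω ^ 2 - Δ₁ ω / η₂s ω|
        ≤ |η₁s ω| / ε^2 + (|η₁ ω| + |η₁s ω|) / ε := by
      intro ω
      have hb1 : |Δ₂ ω * η₁s ω / η₂s ω ^ 2| ≤ |η₁s ω| / ε^2 := by
        rw [abs_div, abs_mul, abs_of_pos (pow_pos (hη₂spos ω) 2)]
        refine div_le_div₀ (abs_nonneg _) ?_ (pow_pos hε 2) (hε2 ω)
        calc |Δ₂ ω| * |η₁s ω| ≤ 1 * |η₁s ω| :=
              mul_le_mul_of_nonneg_right (hΔ₂b ω) (abs_nonneg _)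
          _ = |η₁s ω| := one_mul _
      have hb2 : |Δ₁ ω / η₂s ω| ≤ (|η₁ ω| + |η₁s ω|) / ε := by
        rw [abs_div, abs_of_pos (hη₂spos ω)]
        exact div_le_div₀ (by positivity) (hΔ₁b ω) hε (hη₂sε ω).1
      calc |Δ₂ ω * η₁s ω / η₂s ω ^ 2 - Δ₁ ω / η₂s ω|
          ≤ |Δ₂ ω * η₁s ω / η₂s ω ^ 2| + |Δ₁ ω / η₂s ω| := abs_sub _ _
        _ ≤ _ := add_le_add hb1 hb2
    have mg₁ : @Measurable Ω ℝ mΩ _ (fun ω => -Δ₂ ω / η₂s ω ^ 2) :=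
      mΔ₂.neg.div (mη₂s.pow_const 2)
    have mg₂ : @Measurable Ω ℝ mΩ _ (fun ω => Δ₂ ω * η₁s ω / η₂s ω ^ 2 - Δ₁ ω / η₂s ω) :=
      ((mΔ₂.mul mη₁s).div (mη₂s.pow_const 2)).sub (mΔ₁.div mη₂s)
    have int1 : Integrable (fun ω => (-Δ₂ ω / η₂s ω ^ 2) * (T ω * U ω)) P :=
      hTU.bdd_mul mg₁.aestronglyMeasurable (c := 1/ε^2) (Filter.Eventually.of_forall fun ω => by rw [Real.norm_eq_abs]; exact hg₁b ω)
    have gbound_int : Integrable (fun ω => |η₁s ω| / ε^2 + (|η₁ ω| + |η₁s ω|) / ε) P :=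
      (hη₁si.abs.div_const _).add ((hη₁i.abs.add hη₁si.abs).div_const _)
    have int2 : Integrable (fun ω => (Δ₂ ω * η₁s ω / η₂s ω ^ 2 - Δ₁ ω / η₂s ω) * T ω) P := by
      apply Integrable.mono' gbound_int (mg₂.mul mT).aestronglyMeasurable
      refine Filter.Eventually.of_forall (fun ω => ?_)
      rw [Real.norm_eq_abs, Pi.mul_apply, abs_mul]
      calc |Δ₂ ω * η₁s ω / η₂s ω ^ 2 - Δ₁ ω / η₂s ω| * |T ω|
          ≤ (|η₁s ω| / ε^2 + (|η₁ ω| + |η₁s ω|) / ε) * 1 :=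
            mul_le_mul (hg₂b ω) (hTb ω) (abs_nonneg _) (by positivity)
        _ = _ := mul_one _
    have int3 : Integrable (fun ω => (-Δ₂ ω / η₂s ω ^ 2) * (η₂s ω * η₁s ω)) P :=
      hη₂η₁.bdd_mul mg₁.aestronglyMeasurable (c := 1/ε^2) (Filter.Eventually.of_forall fun ω => by rw [Real.norm_eq_abs]; exact hg₁b ω)
    have int4 : Integrable (fun ω => (Δ₂ ω * η₁s ω / η₂s ω ^ 2 - Δ₁ ω / η₂s ω) * η₂s ω) P := by
      apply Integrable.mono' gbound_int (mg₂.mul mη₂s).aestronglyMeasurable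
      refine Filter.Eventually.of_forall (fun ω => ?_)
      rw [Real.norm_eq_abs, Pi.mul_apply, abs_mul]
      have h := hη₂sε ω
      have hb : |η₂s ω| ≤ 1 := by rw [abs_le]; constructor <;> linarith
      calc |Δ₂ ω * η₁s ω / η₂s ω ^ 2 - Δ₁ ω / η₂s ω| * |η₂s ω|
          ≤ (|η₁s ω| / ε^2 + (|η₁ ω| + |η₁s ω|) / ε) * 1 :=
            mul_le_mul (hg₂b ω) hb (abs_nonneg _) (by positivity)
        _ = _ := mul_one _
    -- strong measurability wrt m
    have smΔ₁ : StronglyMeasurable[m] Δ₁ := by rw [hΔ₁def]; exact hη₁.sub hη₁s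
    have smΔ₂ : StronglyMeasurable[m] Δ₂ := by rw [hΔ₂def]; exact hη₂.sub hη₂s
    have smg₁ : StronglyMeasurable[m] (fun ω => -Δ₂ ω / η₂s ω ^ 2) := by
      rw [stronglyMeasurable_iff_measurable]
      exact (stronglyMeasurable_iff_measurable.mp smΔ₂).neg.div
        ((stronglyMeasurable_iff_measurable.mp hη₂s).pow_const 2)
    have smg₂ : StronglyMeasurable[m] (fun ω => Δ₂ ω * η₁s ω / η₂s ω ^ 2 - Δ₁ ω / η₂s ω) := by
      rw [stronglyMeasurable_iff_measurable]
      exact (((stronglyMeasurable_iff_measurable.mp smΔ₂).mul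
        (stronglyMeasurable_iff_measurable.mp hη₁s)).div
        ((stronglyMeasurable_iff_measurable.mp hη₂s).pow_const 2)).sub
        ((stronglyMeasurable_iff_measurable.mp smΔ₁).div
        (stronglyMeasurable_iff_measurable.mp hη₂s))
    -- conditional expectation computations
    have eq1 : ∫ ω, (-Δ₂ ω / η₂s ω ^ 2) * (T ω * U ω) ∂P
        = ∫ ω, (-Δ₂ ω / η₂s ω ^ 2) * (η₂s ω * η₁s ω) ∂P := by
      rw [pullout hm P _ _ smg₁ int1 hTU]
      apply integral_congr_ae
      filter_upwards [hreg] with ω hω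
      rw [← hω]
    have eq2 : ∫ ω, (Δ₂ ω * η₁s ω / η₂s ω ^ 2 - Δ₁ ω / η₂s ω) * T ω ∂P
        = ∫ ω, (Δ₂ ω * η₁s ω / η₂s ω ^ 2 - Δ₁ ω / η₂s ω) * η₂s ω ∂P := by
      rw [pullout hm P _ _ smg₂ int2 hTint]
      apply integral_congr_ae
      filter_upwards [hprop] with ω hω
      rw [← hω]
    calc ∫ ω, F' 0 ω ∂P
        = ∫ ω, ((-Δ₂ ω / η₂s ω ^ 2) * (T ω * U ω)
            + (Δ₂ ω * η₁s ω / η₂s ω ^ 2 - Δ₁ ω / η₂s ω) * T ω + Δ₁ ω) ∂P :=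
          integral_congr_ae (Filter.Eventually.of_forall hpt)
      _ = (∫ ω, (-Δ₂ ω / η₂s ω ^ 2) * (T ω * U ω) ∂P
            + ∫ ω, (Δ₂ ω * η₁s ω / η₂s ω ^ 2 - Δ₁ ω / η₂s ω) * T ω ∂P) + ∫ ω, Δ₁ ω ∂P := by
          have int12 : Integrable (fun ω => -Δ₂ ω / η₂s ω ^ 2 * (T ω * U ω)
              + (Δ₂ ω * η₁s ω / η₂s ω ^ 2 - Δ₁ ω / η₂s ω) * T ω) P := int1.add int2
          rw [integral_add int12 hΔ₁i, integral_add int1 int2]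
      _ = (∫ ω, (-Δ₂ ω / η₂s ω ^ 2) * (η₂s ω * η₁s ω) ∂P
            + ∫ ω, (Δ₂ ω * η₁s ω / η₂s ω ^ 2 - Δ₁ ω / η₂s ω) * η₂s ω ∂P) + ∫ ω, Δ₁ ω ∂P := by
          rw [eq1, eq2]
      _ = ∫ ω, ((-Δ₂ ω / η₂s ω ^ 2) * (η₂s ω * η₁s ω)
            + (Δ₂ ω * η₁s ω / η₂s ω ^ 2 - Δ₁ ω / η₂s ω) * η₂s ω + Δ₁ ω) ∂P := by
          have int34 : Integrable (fun ω => -Δ₂ ω / η₂s ω ^ 2 * (η₂s ω * η₁s ω)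
              + (Δ₂ ω * η₁s ω / η₂s ω ^ 2 - Δ₁ ω / η₂s ω) * η₂s ω) P := int3.add int4
          rw [integral_add int34 hΔ₁i, integral_add int3 int4]
      _ = ∫ ω, (0:ℝ) ∂P := by
          apply integral_congr_ae
          refine Filter.Eventually.of_forall (fun ω => ?_)
          have := hη₂sne ω
          field_simp
          ring
      _ = 0 := integral_zero _ _
  rw [hzero] at hderiv
  subst hΔ₂def
  subst hΔ₁def
  exact hderiv
end

section
/- Let J: Θ → ℝ^{d×d} be the Jacobian of a continuously differentiable map M: Θ → ℝ^d with M(θ*) = 0, and suppose each entry of J is Lipschitz at θ* with constant c′ and the smallest singular value of J(θ*) is at least c₃ > 0. Then for every θ in the open ball of radius c₃/(2√d c′) around θ*, we have 2‖M(θ)‖ ≥ ‖J(θ*)(θ − θ*)‖. -/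
open Metric

/-!
Taylor's theorem with the mean value inequality bounds the remainder `M θ - J(θ*)(θ - θ*)` by
`√d c' ‖θ - θ*‖²`, the factor `√d` coming from assembling the Lipschitz bounds on the `d` rows
of the Jacobian into an operator-norm bound. Inside the ball this remainder is at most
`c₃ ‖θ - θ*‖ / 2 ≤ ‖J(θ*)(θ - θ*)‖ / 2`, and the triangle inequality gives the claim.
-/

namespace EuclideanSpace

variable {ι E : Type*} [Fintype ι] [NormedAddCommGroup E] [NormedSpace ℝ E]

theorem norm_le_sqrt_card_mul {v : EuclideanSpace ℝ ι} {C : ℝ} (h : ∀ i, ‖v i‖ ≤ C) :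
    ‖v‖ ≤ √(Fintype.card ι) * C := by
  cases isEmpty_or_nonempty ι with
  | inl _ => simp [Subsingleton.elim v 0]
  | inr hι =>
    have hC : 0 ≤ C := (norm_nonneg _).trans (h hι.some)
    calc ‖v‖ = √(∑ i, ‖v i‖ ^ 2) := norm_eq v
      _ ≤ √(∑ _ : ι, C ^ 2) := by gcongr with i; exact h i
      _ = √(Fintype.card ι) * C := by
        rw [Finset.sum_const, Finset.card_univ, nsmul_eq_mul, Real.sqrt_mul (Nat.cast_nonneg _),
          Real.sqrt_sq hC]

theorem opNorm_le_sqrt_card_mul {A : E →L[ℝ] EuclideanSpace ℝ ι} {C : ℝ} (hC : 0 ≤ C)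
    (h : ∀ i, ‖proj i ∘L A‖ ≤ C) : ‖A‖ ≤ √(Fintype.card ι) * C := by
  refine A.opNorm_le_bound (by positivity) fun v => ?_
  rw [mul_assoc]
  exact norm_le_sqrt_card_mul fun i =>
    ((proj i ∘L A).le_opNorm v).trans (mul_le_mul_of_nonneg_right (h i) (norm_nonneg v))

theorem fderiv_apply {f : E → EuclideanSpace ℝ ι} {x : E} (hf : DifferentiableAt ℝ f x)
    (i : ι) : fderiv ℝ (fun y => f y i) x = proj i ∘L fderiv ℝ f x :=
  (hasFDerivWithinAt_univ.1
    ((hasFDerivWithinAt_piLp 2).1 hf.hasFDerivAt.hasFDerivWithinAt i)).fderiv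

end EuclideanSpace

theorem norm_sub_sub_fderiv_le_of_norm_fderiv_sub_le {E F : Type*} [NormedAddCommGroup E]
    [NormedSpace ℝ E] [NormedAddCommGroup F] [NormedSpace ℝ F] {f : E → F} {x₀ : E} {c : ℝ}
    (hc : 0 ≤ c) (hf : Differentiable ℝ f)
    (hlip : ∀ y, ‖fderiv ℝ f y - fderiv ℝ f x₀‖ ≤ c * ‖y - x₀‖) (x : E) :
    ‖f x - f x₀ - fderiv ℝ f x₀ (x - x₀)‖ ≤ c * ‖x - x₀‖ ^ 2 := by
  have hx : x ∈ closedBall x₀ ‖x - x₀‖ := by rw [mem_closedBall, dist_eq_norm]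
  have hbound : ∀ y ∈ closedBall x₀ ‖x - x₀‖,
      ‖fderiv ℝ f y - fderiv ℝ f x₀‖ ≤ c * ‖x - x₀‖ := fun y hy =>
    (hlip y).trans (mul_le_mul_of_nonneg_left (mem_closedBall_iff_norm.1 hy) hc)
  have := (convex_closedBall x₀ _).norm_image_sub_le_of_norm_fderiv_le'
    (fun y _ => hf y) hbound (mem_closedBall_self (norm_nonneg _)) hx
  rwa [mul_assoc, ← sq] at this

theorem stmt_4_general {d : ℕ} (c' c₃ : ℝ) (hc₃ : 0 < c₃)
    (M : EuclideanSpace ℝ (Fin d) → EuclideanSpace ℝ (Fin d))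
    (θstar : EuclideanSpace ℝ (Fin d))
    (hM : ContDiff ℝ 1 M) (hM0 : M θstar = 0)
    (hrow : ∀ (j : Fin d) (θ : EuclideanSpace ℝ (Fin d)),
      ‖fderiv ℝ (fun x => M x j) θ - fderiv ℝ (fun x => M x j) θstar‖ ≤ c' * ‖θ - θstar‖)
    (hsv : ∀ v : EuclideanSpace ℝ (Fin d), c₃ * ‖v‖ ≤ ‖fderiv ℝ M θstar v‖) :
    ∀ θ ∈ ball θstar (c₃ / (2 * Real.sqrt d * c')),
      ‖fderiv ℝ M θstar (θ - θstar)‖ ≤ 2 * ‖M θ‖ := by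
  intro θ hθ
  rw [mem_ball, dist_eq_norm] at hθ
  -- The ball contains `θ`, so its radius is positive; this forces `c' > 0`.
  have hden : 0 < 2 * √d * c' :=
    (div_pos_iff_of_pos_left hc₃).1 ((norm_nonneg _).trans_lt hθ)
  have hc' : 0 ≤ c' := (pos_of_mul_pos_right hden (by positivity)).le
  have hM' : Differentiable ℝ M := hM.differentiable one_ne_zero
  have hlip (y) : ‖fderiv ℝ M y - fderiv ℝ M θstar‖ ≤ √d * c' * ‖y - θstar‖ :=
    calc _ ≤ √(Fintype.card (Fin d)) * (c' * ‖y - θstar‖) := by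
          refine EuclideanSpace.opNorm_le_sqrt_card_mul (by positivity) fun j => ?_
          rw [ContinuousLinearMap.comp_sub, ← EuclideanSpace.fderiv_apply (hM' y),
            ← EuclideanSpace.fderiv_apply (hM' θstar)]
          exact hrow j y
      _ = _ := by rw [Fintype.card_fin, mul_assoc]
  have hrem := norm_sub_sub_fderiv_le_of_norm_fderiv_sub_le (by positivity) hM' hlip θ
  rw [hM0, sub_zero] at hrem
  have hsmall : √d * c' * ‖θ - θstar‖ ≤ c₃ / 2 := by
    rw [lt_div_iff₀ hden] at hθ
    linarith
  set v := θ - θstar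
  have hJv : ‖fderiv ℝ M θstar v‖ ≤ ‖M θ‖ + ‖fderiv ℝ M θstar v‖ / 2 :=
    calc ‖fderiv ℝ M θstar v‖ ≤ ‖M θ‖ + ‖M θ - fderiv ℝ M θstar v‖ :=
          norm_le_norm_add_norm_sub _ _
      _ ≤ ‖M θ‖ + √d * c' * ‖v‖ * ‖v‖ := by rw [mul_assoc _ ‖v‖, ← sq]; gcongr
      _ ≤ ‖M θ‖ + c₃ * ‖v‖ / 2 := by nlinarith [norm_nonneg v]
      _ ≤ ‖M θ‖ + ‖fderiv ℝ M θstar v‖ / 2 := by linarith [hsv v]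
  linarith

/-- Let `M : ℝ^d → ℝ^d` be C¹ with `M(θ*) = 0`, suppose each component's
gradient (row of the Jacobian) is Lipschitz at `θ*` with constant `c′`, and the smallest
singular value of `J(θ*) = fderiv M θ*` is at least `c₃ > 0` (i.e. `‖J(θ*)v‖ ≥ c₃‖v‖`).
Then for every `θ` in the open ball of radius `c₃/(2√d c′)` around `θ*`,
`2‖M(θ)‖ ≥ ‖J(θ*)(θ − θ*)‖`. -/
theorem stmt_4 {d : ℕ} (c' c₃ : ℝ) (hc' : 0 < c') (hc₃ : 0 < c₃)
    (M : EuclideanSpace ℝ (Fin d) → EuclideanSpace ℝ (Fin d))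
    (θstar : EuclideanSpace ℝ (Fin d))
    (hM : ContDiff ℝ 1 M) (hM0 : M θstar = 0)
    (hrow : ∀ (j : Fin d) (θ : EuclideanSpace ℝ (Fin d)),
      ‖fderiv ℝ (fun x => M x j) θ - fderiv ℝ (fun x => M x j) θstar‖ ≤ c' * ‖θ - θstar‖)
    (hsv : ∀ v : EuclideanSpace ℝ (Fin d), c₃ * ‖v‖ ≤ ‖fderiv ℝ M θstar v‖) :
    ∀ θ ∈ ball θstar (c₃ / (2 * Real.sqrt d * c')),
      ‖fderiv ℝ M θstar (θ - θstar)‖ ≤ 2 * ‖M θ‖ :=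
  stmt_4_general c' c₃ hc₃ M θstar hM hM0 hrow hsv
end
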